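/- Let f : ℤ^d → ℝ. (a) If V is a local minimum set of L_n f, then there exists a local minimum set W of f with W ⊆ V. (b) If V is a local maximum set of U_n f, then there exists a local maximum set W of f with W ⊆ V. -/

import Mathlib

open Set

/-- A connection (connected class) on `ℤ^d`. -/
def IsConnection {d : ℕ} (C : Set (Set (Fin d → ℤ))) : Prop :=
  ∅ ∈ C ∧ (∀ x : Fin d → ℤ, {x} ∈ C) ∧
    ∀ S : Set (Set (Fin d → ℤ)), (∀ A ∈ S, A ∈ C) → (⋂₀ S).Nonempty → ⋃₀ S ∈ C

/-- A connection on `ℤ^d` satisfying the additional axioms (α), (β), (γ). -/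
def GoodConnection {d : ℕ} (C : Set (Set (Fin d → ℤ))) : Prop :=
  IsConnection C ∧
  Set.univ ∈ C ∧
  (∀ (a : Fin d → ℤ), ∀ V ∈ C, (fun x => a + x) '' V ∈ C) ∧
  (∀ V ∈ C, ∀ W ∈ C, V ⊂ W → ∃ x ∈ W \ V, insert x V ∈ C)

/-- `𝒩_n(x)`: the connected sets of cardinality `n+1` containing `x`. -/
def Nn {d : ℕ} (C : Set (Set (Fin d → ℤ))) (n : ℕ) (x : Fin d → ℤ) :
    Set (Set (Fin d → ℤ)) :=
  {V | V ∈ C ∧ x ∈ V ∧ V.encard = (n : ℕ∞) + 1}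

/-- The operator `L_n`. -/
noncomputable def Ln {d : ℕ} (C : Set (Set (Fin d → ℤ))) (n : ℕ)
    (f : (Fin d → ℤ) → ℝ) (x : Fin d → ℤ) : ℝ :=
  sSup ((fun V => sInf (f '' V)) '' Nn C n x)

/-- The operator `U_n`. -/
noncomputable def Un {d : ℕ} (C : Set (Set (Fin d → ℤ))) (n : ℕ)
    (f : (Fin d → ℤ) → ℝ) (x : Fin d → ℤ) : ℝ :=
  sInf ((fun V => sSup (f '' V)) '' Nn C n x)

/-- The set of points adjacent to `V`. -/
def adjSet {d : ℕ} (C : Set (Set (Fin d → ℤ))) (V : Set (Fin d → ℤ)) :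
    Set (Fin d → ℤ) :=
  {x | x ∉ V ∧ insert x V ∈ C}

/-- `V` is a local maximum set of `f`. -/
def IsLocalMaxSet {d : ℕ} (C : Set (Set (Fin d → ℤ))) (f : (Fin d → ℤ) → ℝ)
    (V : Set (Fin d → ℤ)) : Prop :=
  V ∈ C ∧ V.Finite ∧ V.Nonempty ∧ ∀ y ∈ adjSet C V, ∀ z ∈ V, f y < f z

/-- `V` is a local minimum set of `f`. -/
def IsLocalMinSet {d : ℕ} (C : Set (Set (Fin d → ℤ))) (f : (Fin d → ℤ) → ℝ)
    (V : Set (Fin d → ℤ)) : Prop :=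
  V ∈ C ∧ V.Finite ∧ V.Nonempty ∧ ∀ y ∈ adjSet C V, ∀ z ∈ V, f z < f y


section Aux

variable {d : ℕ} {C : Set (Set (Fin d → ℤ))}

lemma union_mem_conn (hC : GoodConnection C) {A B : Set (Fin d → ℤ)}
    (hA : A ∈ C) (hB : B ∈ C) (h : (A ∩ B).Nonempty) : A ∪ B ∈ C := by
  have := hC.1.2.2 {A, B} (by rintro X (rfl | rfl) <;> assumption)
    (by rw [Set.sInter_pair]; exact h)
  rwa [Set.sUnion_pair] at this

lemma grow_conn (hC : GoodConnection C) (k : ℕ) :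
    ∀ V B : Set (Fin d → ℤ), V ∈ C → B ∈ C → V ⊆ B → V.Finite →
      V.encard + k ≤ B.encard →
      ∃ A, A ∈ C ∧ V ⊆ A ∧ A ⊆ B ∧ A.Finite ∧ A.encard = V.encard + k := by
  induction k with
  | zero =>
    intro V B hV _ hVB hVfin _
    exact ⟨V, hV, subset_rfl, hVB, hVfin, by simp⟩
  | succ k ih =>
    intro V B hV hB hVB hVfin hcard
    obtain ⟨A, hA, hVA, hAB, hAfin, hAcard⟩ := ih V B hV hB hVB hVfin
      (le_trans (add_le_add le_rfl (by exact_mod_cast Nat.le_succ k)) hcard)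
    have hVtop : V.encard ≠ ⊤ := hVfin.encard_lt_top.ne
    have hlt : A.encard < B.encard := by
      rw [hAcard]
      refine lt_of_lt_of_le ?_ hcard
      exact WithTop.add_lt_add_left hVtop (show (k : ℕ∞) < ((k + 1 : ℕ) : ℕ∞) by exact_mod_cast Nat.lt_add_one k)
    have hss : A ⊂ B := HasSubset.Subset.ssubset_of_ne hAB (fun h => by
      rw [h] at hlt; exact lt_irrefl _ hlt)
    obtain ⟨x, hx, hins⟩ := hC.2.2.2 A hA B hB hss
    refine ⟨insert x A, hins, hVA.trans (Set.subset_insert _ _),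
      Set.insert_subset hx.1 hAB, hAfin.insert x, ?_⟩
    rw [Set.encard_insert_of_notMem hx.2, hAcard]
    push_cast
    ring

lemma Nn_mem_finite {n : ℕ} {x : Fin d → ℤ} {A : Set (Fin d → ℤ)}
    (hA : A ∈ Nn C n x) : A.Finite :=
  Set.finite_of_encard_eq_coe (k := n + 1) (by rw [hA.2.2]; push_cast; ring)

lemma infinite_pi (hd : 1 ≤ d) : Infinite (Fin d → ℤ) :=
  Infinite.of_injective (fun z : ℤ => fun _ => z)
    (fun a b h => by simpa using congrFun h ⟨0, hd⟩)

lemma Nn_nonempty (hd : 1 ≤ d) (hC : GoodConnection C) (n : ℕ) (x : Fin d → ℤ) :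
    (Nn C n x).Nonempty := by
  haveI := infinite_pi hd
  have huniv : (Set.univ : Set (Fin d → ℤ)).encard = ⊤ :=
    Set.infinite_univ.encard_eq
  obtain ⟨A, hA, hxA, _, _, hAcard⟩ := grow_conn hC n {x} Set.univ
    (hC.1.2.1 x) hC.2.1 (Set.subset_univ _) (Set.finite_singleton x)
    (by rw [huniv]; exact le_top)
  refine ⟨A, hA, hxA rfl, ?_⟩
  rw [hAcard, Set.encard_singleton, add_comm]

lemma bddAbove_Ln {n : ℕ} {x : Fin d → ℤ} (f : (Fin d → ℤ) → ℝ) :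
    BddAbove ((fun V => sInf (f '' V)) '' Nn C n x) := by
  refine ⟨f x, ?_⟩
  rintro _ ⟨A, hA, rfl⟩
  exact csInf_le ((Nn_mem_finite hA).image f).bddBelow ⟨x, hA.2.1, rfl⟩

lemma sInf_image_le_Ln {n : ℕ} {x : Fin d → ℤ} {A : Set (Fin d → ℤ)}
    (f : (Fin d → ℤ) → ℝ) (hA : A ∈ Nn C n x) :
    sInf (f '' A) ≤ Ln C n f x :=
  le_csSup (bddAbove_Ln f) ⟨A, hA, rfl⟩

lemma Ln_le_self (hd : 1 ≤ d) (hC : GoodConnection C) (n : ℕ)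
    (f : (Fin d → ℤ) → ℝ) (x : Fin d → ℤ) : Ln C n f x ≤ f x := by
  refine csSup_le ((Nn_nonempty hd hC n x).image _) ?_
  rintro _ ⟨A, hA, rfl⟩
  exact csInf_le ((Nn_mem_finite hA).image f).bddBelow ⟨x, hA.2.1, rfl⟩

/-- Part (a) as a standalone lemma. -/
lemma partA_min {d : ℕ} (hd : 1 ≤ d) {C : Set (Set (Fin d → ℤ))}
    (hC : GoodConnection C) (n : ℕ) (f : (Fin d → ℤ) → ℝ)
    (V : Set (Fin d → ℤ)) (hV : IsLocalMinSet C (Ln C n f) V) :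
    ∃ W, IsLocalMinSet C f W ∧ W ⊆ V := by
  obtain ⟨hVC, hVfin, hVne, hVmin⟩ := hV
  haveI := infinite_pi hd
  obtain ⟨x0, hx0V, hx0min⟩ := Set.exists_min_image V f hVfin hVne
  -- adjacency of V is nonempty
  have hVss : V ⊂ Set.univ := Set.ssubset_univ_iff.mpr
    (fun h => Set.infinite_univ (h ▸ hVfin))
  obtain ⟨y, hy, hyins⟩ := hC.2.2.2 V hVC Set.univ hC.2.1 hVss
  have hyadj : y ∈ adjSet C V := ⟨hy.2, hyins⟩
  -- key claim: f x0 ≤ Ln f x0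
  have hLx0 : f x0 ≤ Ln C n f x0 := by
    by_contra h
    push_neg at h
    have h1 : Ln C n f x0 < Ln C n f y := hVmin y hyadj x0 hx0V
    obtain ⟨v, hvmem, hv⟩ := exists_lt_of_lt_csSup
      ((Nn_nonempty hd hC n y).image _) h1
    obtain ⟨A, hA, rfl⟩ := hvmem
    have hyA : y ∈ A := hA.2.1
    have hAfin : A.Finite := Nn_mem_finite hA
    have hBC : insert y V ∪ A ∈ C :=
      union_mem_conn hC hyins hA.1 ⟨y, Set.mem_insert y V, hyA⟩
    have hx0B : x0 ∈ insert y V ∪ A := Or.inl (Set.mem_insert_of_mem _ hx0V)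
    have hBcard : ({x0} : Set (Fin d → ℤ)).encard + n ≤ (insert y V ∪ A).encard := by
      rw [Set.encard_singleton]
      calc (1 : ℕ∞) + n = (n : ℕ∞) + 1 := by rw [add_comm]
        _ = A.encard := hA.2.2.symm
        _ ≤ (insert y V ∪ A).encard := Set.encard_mono Set.subset_union_right
    obtain ⟨A0, hA0C, hsub0, hA0B, hA0fin, hA0card⟩ := grow_conn hC n {x0}
      (insert y V ∪ A) (hC.1.2.1 x0) hBC (Set.singleton_subset_iff.mpr hx0B)
      (Set.finite_singleton x0) hBcard
    have hx0A0 : x0 ∈ A0 := hsub0 rfl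
    have hA0Nn : A0 ∈ Nn C n x0 :=
      ⟨hA0C, hx0A0, by rw [hA0card, Set.encard_singleton, add_comm]⟩
    obtain ⟨a, haA0, hamin⟩ := Set.exists_min_image A0 f hA0fin ⟨x0, hx0A0⟩
    have key : Ln C n f x0 < f a := by
      rcases hA0B haA0 with hav | haA
      · rcases hav with rfl | haV
        · exact lt_of_lt_of_le h1 (Ln_le_self hd hC n f a)
        · exact lt_of_lt_of_le h (hx0min a haV)
      · exact lt_of_lt_of_le hv (csInf_le (hAfin.image f).bddBelow ⟨a, haA, rfl⟩)
    have h2 : f a ≤ sInf (f '' A0) := by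
      refine le_csInf (Set.Nonempty.image f ⟨x0, hx0A0⟩) ?_
      rintro _ ⟨b, hb, rfl⟩
      exact hamin b hb
    have h3 : sInf (f '' A0) ≤ Ln C n f x0 := sInf_image_le_Ln f hA0Nn
    linarith
  -- adjacent points of V have big f-values
  have hadjV : ∀ z ∈ adjSet C V, f x0 < f z := fun z hz =>
    lt_of_le_of_lt hLx0 (lt_of_lt_of_le (hVmin z hz x0 hx0V) (Ln_le_self hd hC n f z))
  -- maximal connected level set through x0
  set S : Set (Set (Fin d → ℤ)) :=
    {W | W ∈ C ∧ W ⊆ V ∧ x0 ∈ W ∧ ∀ w ∈ W, f w ≤ f x0} with hS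
  have hSfin : S.Finite := hVfin.finite_subsets.subset (fun W hW => hW.2.1)
  have hSne : S.Nonempty :=
    ⟨{x0}, hC.1.2.1 x0, Set.singleton_subset_iff.mpr hx0V, rfl,
      fun w hw => by rw [hw]⟩
  obtain ⟨W, hWS, hWmax⟩ := Set.Finite.exists_maximalFor Set.ncard S hSfin hSne
  obtain ⟨hWC, hWV, hx0W, hWle⟩ := hWS
  have hWfin : W.Finite := hVfin.subset hWV
  refine ⟨W, ⟨hWC, hWfin, ⟨x0, hx0W⟩, ?_⟩, hWV⟩
  intro z hz w hw
  have hfw : f w ≤ f x0 := hWle w hw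
  have hbig : f x0 < f z := by
    by_cases hzV : z ∈ V
    · by_contra hle
      push_neg at hle
      have hins : insert z W ∈ S := by
        refine ⟨hz.2, Set.insert_subset hzV hWV, Set.mem_insert_of_mem _ hx0W, ?_⟩
        rintro w (rfl | hwW)
        · exact hle
        · exact hWle w hwW
      have h1 : W.ncard ≤ (insert z W).ncard :=
        Set.ncard_le_ncard (Set.subset_insert _ _) (hWfin.insert z)
      have h2 := hWmax hins h1
      have h3 : (insert z W).ncard = W.ncard + 1 :=
        Set.ncard_insert_of_notMem hz.1 hWfin
      omega
    · have hzW : insert z W ∈ C := hz.2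
      have hzVC : insert z V ∈ C := by
        have := union_mem_conn hC hzW hVC ⟨x0, Set.mem_insert_of_mem _ hx0W, hx0V⟩
        rwa [Set.insert_union, Set.union_eq_self_of_subset_left hWV] at this
      exact hadjV z ⟨hzV, hzVC⟩
  exact lt_of_le_of_lt hfw hbig

lemma sInf_neg_image {A : Set (Fin d → ℤ)} (hA : A.Finite) (hne : A.Nonempty)
    (f : (Fin d → ℤ) → ℝ) :
    sInf ((fun v => -f v) '' A) = - sSup (f '' A) := by
  obtain ⟨a, haA, hmax⟩ := Set.exists_max_image A f hA hne
  have h1 : sSup (f '' A) = f a := by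
    refine le_antisymm (csSup_le (hne.image f) ?_)
      (le_csSup (hA.image f).bddAbove ⟨a, haA, rfl⟩)
    rintro _ ⟨b, hb, rfl⟩
    exact hmax b hb
  have h2 : sInf ((fun v => -f v) '' A) = -(f a) := by
    refine le_antisymm (csInf_le (hA.image _).bddBelow ⟨a, haA, rfl⟩)
      (le_csInf (hne.image _) ?_)
    rintro _ ⟨b, hb, rfl⟩
    exact neg_le_neg (hmax b hb)
  rw [h1, h2]

lemma Un_eq_neg_Ln (hd : 1 ≤ d) (hC : GoodConnection C) (n : ℕ)
    (f : (Fin d → ℤ) → ℝ) (x : Fin d → ℤ) :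
    Un C n f x = - Ln C n (fun v => -f v) x := by
  have himg : ((fun V => sInf ((fun v => -f v) '' V)) '' Nn C n x)
      = -((fun V => sSup (f '' V)) '' Nn C n x) := by
    ext r
    constructor
    · rintro ⟨A, hA, rfl⟩
      show sInf ((fun v => -f v) '' A) ∈ _
      rw [sInf_neg_image (Nn_mem_finite hA) ⟨x, hA.2.1⟩ f, Set.mem_neg, neg_neg]
      exact ⟨A, hA, rfl⟩
    · intro hr
      rw [Set.mem_neg] at hr
      obtain ⟨A, hA, hAr⟩ := hr
      refine ⟨A, hA, ?_⟩
      show sInf ((fun v => -f v) '' A) = r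
      rw [sInf_neg_image (Nn_mem_finite hA) ⟨x, hA.2.1⟩ f]
      have : sSup (f '' A) = -r := hAr
      rw [this, neg_neg]
  rw [Ln, himg, Un, Real.sInf_def]

/-- Part (b) as a standalone lemma. -/
lemma partB_max {d : ℕ} (hd : 1 ≤ d) {C : Set (Set (Fin d → ℤ))}
    (hC : GoodConnection C) (n : ℕ) (f : (Fin d → ℤ) → ℝ)
    (V : Set (Fin d → ℤ)) (hV : IsLocalMaxSet C (Un C n f) V) :
    ∃ W, IsLocalMaxSet C f W ∧ W ⊆ V := by
  obtain ⟨hVC, hVfin, hVne, hVmax⟩ := hV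
  have hV' : IsLocalMinSet C (Ln C n (fun v => -f v)) V := by
    refine ⟨hVC, hVfin, hVne, fun y hy z hz => ?_⟩
    have := hVmax y hy z hz
    have e1 := Un_eq_neg_Ln hd hC n f y
    have e2 := Un_eq_neg_Ln hd hC n f z
    linarith
  obtain ⟨W, ⟨hWC, hWfin, hWne, hWmin⟩, hWV⟩ := partA_min hd hC n (fun v => -f v) V hV'
  refine ⟨W, ⟨hWC, hWfin, hWne, fun y hy z hz => ?_⟩, hWV⟩
  have := hWmin y hy z hz
  simpa using this

end Aux

/-- (a) Any local minimum set of `L_n f` contains a local minimum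
set of `f`. (b) Any local maximum set of `U_n f` contains a local maximum set of `f`. -/
theorem no_new_local_extrema {d : ℕ} (hd : 1 ≤ d)
    (C : Set (Set (Fin d → ℤ))) (hC : GoodConnection C)
    (hadj : ∀ V ∈ C, V.Finite → (adjSet C V).Finite)
    (n : ℕ) (hn : 1 ≤ n) (f : (Fin d → ℤ) → ℝ) (V : Set (Fin d → ℤ)) :
    (IsLocalMinSet C (Ln C n f) V → ∃ W, IsLocalMinSet C f W ∧ W ⊆ V) ∧
    (IsLocalMaxSet C (Un C n f) V → ∃ W, IsLocalMaxSet C f W ∧ W ⊆ V) := by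
  constructor
  · exact fun h => partA_min hd hC n f V h
  · exact fun h => partB_max hd hC n f V h
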